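/- arXiv:2503.00157 — 2 statements merged into one kernel-verified Lean document; each statement's English description precedes it below -/
import Mathlib

section
/- For every θ ∈ ℝ^d: the free energy F_θ attains its infimum over probability densities on ℝ^d with finite second moment and integrable entropy at a unique (up to almost-everywhere equality) density ρ_{*,θ}; this minimizer is given by ρ_{*,θ}(x) ∝ exp(−V₀(x) + x·(θ − ∇h(y_θ))) where y_θ = ∫ x ρ_{*,θ}(x) dx; y_θ is the unique fixed point of f_θ; and w(θ) = |θ|²/(2κ) + h(y_θ) − ∇h(y_θ)·y_θ − log ∫_{ℝ^d} exp(−V₀(x) + x·(θ − ∇h(y_θ))) dx. -/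
open MeasureTheory Real Filter Set
open scoped RealInnerProductSpace ENNReal NNReal

noncomputable section

/-- `ℝ^d` as a Euclidean space. -/
abbrev Euc (d : ℕ) := EuclideanSpace ℝ (Fin d)

/-- `ℝ^{dN}`, the configuration space of `N` particles in `ℝ^d`. -/
abbrev Conf (d N : ℕ) := EuclideanSpace ℝ (Fin N × Fin d)

/-- The `i`-th particle of a configuration. -/
def comp {d N : ℕ} (x : Conf d N) (i : Fin N) : Euc d := WithLp.toLp 2 (fun j => x (i, j))

/-- The barycenter `x̄ = (1/N) ∑ᵢ xᵢ` of a configuration. -/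
def bary {d N : ℕ} (x : Conf d N) : Euc d := (N : ℝ)⁻¹ • ∑ i, comp x i

/-- The probability measure with density proportional to a given nonnegative function. -/
def probOfDensity {α : Type*} [MeasureSpace α] (g : α → ℝ) : Measure α :=
  (ENNReal.ofReal (∫ x, g x))⁻¹ • (volume.withDensity fun x => ENNReal.ofReal (g x))

/-- A probability measure `μ` satisfies a logarithmic Sobolev inequality with constant `C`
if for every smooth compactly supported `φ`,
`∫ φ² log φ² dμ − (∫ φ² dμ) log (∫ φ² dμ) ≤ C ∫ |∇φ|² dμ`. -/
def SatisfiesLSI {E : Type*} [NormedAddCommGroup E] [InnerProductSpace ℝ E]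
    [CompleteSpace E] [MeasurableSpace E] (μ : Measure E) (C : ℝ) : Prop :=
  ∀ φ : E → ℝ, ContDiff ℝ (⊤ : ℕ∞) φ → HasCompactSupport φ →
    (∫ x, φ x ^ 2 * Real.log (φ x ^ 2) ∂μ)
      - (∫ x, φ x ^ 2 ∂μ) * Real.log (∫ x, φ x ^ 2 ∂μ)
      ≤ C * ∫ x, ‖gradient φ x‖ ^ 2 ∂μ

/-- The mean-field `N`-particle energy `U_N(x) = ∑ᵢ V₀(xᵢ) + N h₀(x̄)`. -/
def UN (d N : ℕ) (V₀ h₀ : Euc d → ℝ) (x : Conf d N) : ℝ :=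
  (∑ i, V₀ (comp x i)) + N * h₀ (bary x)

/-- A probability density on `ℝ^d` with finite second moment, integrable entropy and
integrable energy (densities with non-integrable energy have `F_θ(μ) = +∞` and do not
contribute to the infimum defining `w`). -/
structure AdmissibleDensity {d : ℕ} (V₀ : Euc d → ℝ) (ρ : Euc d → ℝ) : Prop where
  meas : Measurable ρ
  nonneg : ∀ x, 0 ≤ ρ x
  total : (∫ x, ρ x) = 1
  mom2 : Integrable (fun x => ρ x * ‖x‖ ^ 2)
  ent : Integrable (fun x => ρ x * Real.log (ρ x))
  energy : Integrable (fun x => ρ x * V₀ x)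

/-- The mean `m_μ = ∫ x μ(x) dx` of a density. -/
def densMean {d : ℕ} (ρ : Euc d → ℝ) : Euc d := ∫ x, ρ x • x

/-- The free energy `F_θ(μ) = ∫ (V₀ − x·θ) μ + h(m_μ) + ∫ μ log μ`. -/
def freeEnergy {d : ℕ} (V₀ h : Euc d → ℝ) (θ : Euc d) (ρ : Euc d → ℝ) : ℝ :=
  (∫ x, ρ x * (V₀ x - ⟪x, θ⟫)) + h (densMean ρ) + ∫ x, ρ x * Real.log (ρ x)

/-- `w(θ) = |θ|²/(2κ) + inf_μ F_θ(μ)`. -/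
def wFun {d : ℕ} (V₀ h : Euc d → ℝ) (κ : ℝ) (θ : Euc d) : ℝ :=
  ‖θ‖ ^ 2 / (2 * κ) + sInf {r : ℝ | ∃ ρ, AdmissibleDensity V₀ ρ ∧ r = freeEnergy V₀ h θ ρ}

/-- The fixed-point map
`f_θ(y) = (∫ x e^{−V₀(x) + x·(θ − ∇h(y))} dx)⁻¹ · ∫ x e^{−V₀(x) + x·(θ − ∇h(y))} x dx`. -/
def ftheta {d : ℕ} (V₀ h : Euc d → ℝ) (θ y : Euc d) : Euc d :=
  (∫ x, Real.exp (-V₀ x + ⟪x, θ - gradient h y⟫))⁻¹ •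
    ∫ x, Real.exp (-V₀ x + ⟪x, θ - gradient h y⟫) • x


open scoped Topology

variable {d : ℕ}


lemma integrable_gauss (b : ℝ) (hb : 0 < b) :
    Integrable (fun x : Euc d => rexp (-b * ‖x‖^2)) := by
  have h := GaussianFourier.integrable_cexp_neg_mul_sq_norm_add (V := Euc d)
    (b := (b:ℂ)) (by simpa using hb) 0 0
  have := h.norm
  simp only [Complex.norm_exp] at this
  refine this.congr (Eventually.of_forall fun x => ?_)
  norm_num
  left
  norm_cast

lemma integrable_gauss_lin (b c : ℝ) (hb : 0 < b) :
    Integrable (fun x : Euc d => rexp (-b * ‖x‖^2 + c * ‖x‖)) := by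
  refine (integrable_gauss (b/2) (by positivity)).const_mul (rexp (c^2/(2*b))) |>.mono' ?_ ?_
  · exact (Continuous.rexp (by continuity)).aestronglyMeasurable
  · refine Eventually.of_forall fun x => ?_
    rw [norm_of_nonneg (exp_pos _).le, ← Real.exp_add]
    apply Real.exp_le_exp.2
    have h2b : (0:ℝ) < 2*b := by linarith
    have key : (c*‖x‖ - (b/2)*‖x‖^2) * (2*b) ≤ c^2 := by nlinarith [sq_nonneg (b*‖x‖ - c)]
    have := (le_div_iff₀ h2b).2 key
    linarith

lemma integrable_poly_gauss (k : ℕ) (b c : ℝ) (hb : 0 < b) :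
    Integrable (fun x : Euc d => ‖x‖^k * rexp (-b * ‖x‖^2 + c * ‖x‖)) := by
  refine (integrable_gauss_lin b (c + k) hb).mono' ?_ ?_
  · exact (Continuous.mul (by continuity) (Continuous.rexp (by continuity))).aestronglyMeasurable
  · refine Eventually.of_forall fun x => ?_
    have h1 : ‖x‖^k ≤ rexp (k * ‖x‖) := by
      calc ‖x‖^k ≤ (rexp ‖x‖)^k := by
            refine pow_le_pow_left₀ (norm_nonneg x) ?_ k
            linarith [Real.add_one_le_exp ‖x‖]
        _ = rexp (k * ‖x‖) := by rw [← Real.exp_nat_mul]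
    rw [norm_of_nonneg (by positivity)]
    calc ‖x‖^k * rexp (-b*‖x‖^2 + c*‖x‖) ≤ rexp (k*‖x‖) * rexp (-b*‖x‖^2 + c*‖x‖) := by
          apply mul_le_mul_of_nonneg_right h1 (exp_pos _).le
      _ = rexp (-b*‖x‖^2 + (c + k)*‖x‖) := by rw [← Real.exp_add]; ring_nf


lemma growth_of_strongconvex (Vc Vb : Euc d → ℝ) (ρ₀ : ℝ) (hρ₀ : 0 < ρ₀)
    (hVc : StrongConvexOn Set.univ ρ₀ Vc) (Mb : ℝ) (hVb : ∀ x, |Vb x| ≤ Mb) :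
    ∃ C : ℝ, 0 ≤ C ∧ ∀ x : Euc d, ρ₀/4 * ‖x‖^2 - C*(‖x‖+1) ≤ Vc x + Vb x := by
  have hMb : 0 ≤ Mb := le_trans (abs_nonneg _) (hVb 0)
  have hVc' : UniformConvexOn Set.univ (fun r => ρ₀/2 * r^2) Vc := hVc
  have hconv : ConvexOn ℝ Set.univ Vc := hVc.convexOn (fun r => by positivity)
  have hcont : Continuous Vc :=
    continuousOn_univ.mp (hconv.continuousOn isOpen_univ)
  obtain ⟨z, hz, hmin⟩ := (isCompact_closedBall (0 : Euc d) 1).exists_isMinOn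
    ⟨0, by simp⟩ hcont.continuousOn
  obtain ⟨c, hc⟩ : ∃ c : ℝ, c = Vc z := ⟨Vc z, rfl⟩
  have hcb : ∀ x : Euc d, ‖x‖ ≤ 1 → c ≤ Vc x := by
    intro x hx
    rw [hc]
    exact hmin (by simpa [Metric.mem_closedBall, dist_eq_norm] using hx)
  obtain ⟨C₁, hC₁⟩ : ∃ C₁ : ℝ, C₁ = |c| + |Vc 0| + 1 := ⟨_, rfl⟩
  have hC₁pos : 0 < C₁ := by rw [hC₁]; positivity
  have hlin : ∀ x : Euc d, -C₁ * (‖x‖ + 1) ≤ Vc x := by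
    intro x
    rcases le_or_gt ‖x‖ 1 with hx | hx
    · have h1 := hcb x hx
      nlinarith [abs_nonneg c, neg_abs_le c, norm_nonneg x, abs_nonneg (Vc 0)]
    · have hxpos : (0:ℝ) < ‖x‖ := by linarith
      obtain ⟨t, ht⟩ : ∃ t : ℝ, t = ‖x‖⁻¹ := ⟨_, rfl⟩
      have htpos : 0 < t := by rw [ht]; positivity
      have hu : ‖t • x‖ = 1 := by
        rw [norm_smul, ht, Real.norm_eq_abs, abs_of_pos (by positivity)]
        field_simp
      have hconvx : Vc (t • x + (1 - t) • (0:Euc d)) ≤ t * Vc x + (1 - t) * Vc 0 :=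
        hconv.2 (Set.mem_univ x) (Set.mem_univ (0:Euc d))
          (le_of_lt htpos) (by rw [ht]; simp; rw [inv_le_one_iff₀]; right; linarith)
          (by ring)
      rw [smul_zero, add_zero] at hconvx
      have hcu := hcb (t • x) (le_of_eq hu)
      have h2 : c ≤ t * Vc x + (1-t) * Vc 0 := le_trans hcu hconvx
      have h3 : ‖x‖ * c ≤ Vc x + (‖x‖ - 1) * Vc 0 := by
        have hh := mul_le_mul_of_nonneg_left h2 (le_of_lt hxpos)
        have htinv : ‖x‖ * t = 1 := by rw [ht]; field_simp
        calc ‖x‖ * c ≤ ‖x‖ * (t * Vc x + (1-t) * Vc 0) := hh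
          _ = (‖x‖ * t) * Vc x + (‖x‖ - ‖x‖ * t) * Vc 0 := by ring
          _ = Vc x + (‖x‖ - 1) * Vc 0 := by rw [htinv]; ring
      nlinarith [neg_abs_le c, neg_abs_le (Vc 0), le_abs_self (Vc 0), abs_nonneg c,
        abs_nonneg (Vc 0)]
  have hmid : ∀ x : Euc d, 2 * Vc ((1/2 : ℝ) • x) - Vc 0 + ρ₀/4 * ‖x‖^2 ≤ Vc x := by
    intro x
    have h := hVc'.2 (Set.mem_univ x) (Set.mem_univ (0:Euc d))
      (by norm_num : (0:ℝ) ≤ 1/2) (by norm_num : (0:ℝ) ≤ 1/2) (by norm_num)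
    simp only [smul_zero, add_zero, sub_zero, smul_eq_mul] at h
    nlinarith [h]
  refine ⟨2*C₁ + |Vc 0| + Mb, by positivity, fun x => ?_⟩
  have h1 := hmid x
  have h2 := hlin ((1/2 : ℝ) • x)
  have h3 : ‖(1/2 : ℝ) • x‖ = ‖x‖/2 := by
    rw [norm_smul, Real.norm_eq_abs, abs_of_pos (by norm_num : (0:ℝ) < 1/2)]; ring
  rw [h3] at h2
  have h4 := abs_le.1 (hVb x)
  nlinarith [neg_abs_le (Vc 0), le_abs_self (Vc 0), abs_nonneg (Vc 0), norm_nonneg x,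
    hC₁pos]
/-- bundled standing hypotheses on the confining potential -/
structure NicePot (V₀ : Euc d → ℝ) : Prop where
  cont : Continuous V₀
  ex : ∃ ρ₀ C : ℝ, 0 < ρ₀ ∧ 0 ≤ C ∧ ∀ x : Euc d, ρ₀/4 * ‖x‖^2 - C*(‖x‖+1) ≤ V₀ x

def Zf (V₀ : Euc d → ℝ) (η : Euc d) : ℝ := ∫ x, rexp (-V₀ x + ⟪x, η⟫)
def Mf (V₀ : Euc d → ℝ) (η : Euc d) : Euc d := ∫ x, rexp (-V₀ x + ⟪x, η⟫) • x
def meanf (V₀ : Euc d → ℝ) (η : Euc d) : Euc d := (Zf V₀ η)⁻¹ • Mf V₀ η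
def Sf (V₀ : Euc d → ℝ) (η : Euc d) : ℝ := Real.log (Zf V₀ η)
def SstarF (V₀ : Euc d → ℝ) (y : Euc d) : ℝ := sSup {r : ℝ | ∃ η, r = ⟪η, y⟫ - Sf V₀ η}
def rhoF (V₀ : Euc d → ℝ) (η : Euc d) : Euc d → ℝ :=
  fun x => rexp (-V₀ x + ⟪x, η⟫) / Zf V₀ η




section GibbsE

variable {V₀ : Euc d → ℝ} {ρ₀ C : ℝ}

lemma cont_g (hV : Continuous V₀) (η : Euc d) :
    Continuous (fun x : Euc d => rexp (-V₀ x + ⟪x, η⟫)) := by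
  apply Continuous.rexp
  exact (hV.neg).add (continuous_id.inner continuous_const)

lemma intgE (hV : Continuous V₀) (hρ₀ : 0 < ρ₀)
    (hgr : ∀ x : Euc d, ρ₀/4 * ‖x‖^2 - C*(‖x‖+1) ≤ V₀ x) (η : Euc d) (k : ℕ) :
    Integrable (fun x : Euc d => ‖x‖^k * rexp (-V₀ x + ⟪x, η⟫)) := by
  refine (((integrable_poly_gauss k (ρ₀/4) (C + ‖η‖) (by positivity)).const_mul
    (rexp C)).mono' ?_ ?_)
  · exact ((continuous_norm.pow k).mul (cont_g hV η)).aestronglyMeasurable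
  · refine Eventually.of_forall fun x => ?_
    rw [norm_of_nonneg (by positivity)]
    have h1 : -V₀ x + ⟪x, η⟫ ≤ -(ρ₀/4) * ‖x‖^2 + (C + ‖η‖) * ‖x‖ + C := by
      have h2 := hgr x
      have h3 : ⟪x, η⟫ ≤ ‖x‖ * ‖η‖ := real_inner_le_norm x η
      nlinarith
    calc ‖x‖^k * rexp (-V₀ x + ⟪x, η⟫)
        ≤ ‖x‖^k * rexp (-(ρ₀/4) * ‖x‖^2 + (C + ‖η‖) * ‖x‖ + C) := by
          exact mul_le_mul_of_nonneg_left (exp_le_exp.2 h1) (by positivity)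
      _ = rexp C * (‖x‖^k * rexp (-(ρ₀/4) * ‖x‖^2 + (C + ‖η‖) * ‖x‖)) := by
          rw [Real.exp_add]; ring
lemma intg0E (hV : Continuous V₀) (hρ₀ : 0 < ρ₀)
    (hgr : ∀ x : Euc d, ρ₀/4 * ‖x‖^2 - C*(‖x‖+1) ≤ V₀ x) (η : Euc d) :
    Integrable (fun x : Euc d => rexp (-V₀ x + ⟪x, η⟫)) := by
  have := intgE hV hρ₀ hgr η 0
  simpa using this

lemma intg_smulE (hV : Continuous V₀) (hρ₀ : 0 < ρ₀)
    (hgr : ∀ x : Euc d, ρ₀/4 * ‖x‖^2 - C*(‖x‖+1) ≤ V₀ x) (η : Euc d) :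
    Integrable (fun x : Euc d => rexp (-V₀ x + ⟪x, η⟫) • x) := by
  refine ((intgE hV hρ₀ hgr η 1).mono' ?_ ?_)
  · exact ((cont_g hV η).smul continuous_id).aestronglyMeasurable
  · refine Eventually.of_forall fun x => ?_
    rw [norm_smul, norm_of_nonneg (exp_pos _).le]
    simp [mul_comm]

lemma int_energy (hV : Continuous V₀) (hρ₀ : 0 < ρ₀) (hC : 0 ≤ C)
    (hgr : ∀ x : Euc d, ρ₀/4 * ‖x‖^2 - C*(‖x‖+1) ≤ V₀ x) (η : Euc d) :
    Integrable (fun x : Euc d => V₀ x * rexp (-V₀ x + ⟪x, η⟫)) := by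
  -- integrable dominating function
  have half : Integrable (fun x : Euc d => rexp (-(V₀ x)/2 + ⟪x, η⟫)) := by
    refine ((integrable_poly_gauss 0 (ρ₀/8) (C/2 + ‖η‖) (by positivity)).const_mul
      (rexp (C/2))).mono' ?_ ?_
    · exact (Continuous.rexp ((hV.neg.div_const 2).add
        (continuous_id.inner continuous_const))).aestronglyMeasurable
    · refine Eventually.of_forall fun x => ?_
      rw [norm_of_nonneg (exp_pos _).le]
      have h2 := hgr x
      have h3 : ⟪x, η⟫ ≤ ‖x‖ * ‖η‖ := real_inner_le_norm x η
      have h1 : -(V₀ x)/2 + ⟪x, η⟫ ≤ -(ρ₀/8) * ‖x‖^2 + (C/2 + ‖η‖) * ‖x‖ + C/2 := by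
        nlinarith
      calc rexp (-(V₀ x)/2 + ⟪x, η⟫) ≤ rexp (-(ρ₀/8) * ‖x‖^2 + (C/2 + ‖η‖) * ‖x‖ + C/2) :=
            exp_le_exp.2 h1
        _ = rexp (C/2) * (‖x‖^0 * rexp (-(ρ₀/8) * ‖x‖^2 + (C/2 + ‖η‖) * ‖x‖)) := by
            rw [Real.exp_add]; ring
  have hdom : Integrable (fun x : Euc d =>
      C * (‖x‖ + 1) * rexp (-V₀ x + ⟪x, η⟫) + rexp (-(V₀ x)/2 + ⟪x, η⟫)) := by
    refine Integrable.add ?_ half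
    have h1 := (intgE hV hρ₀ hgr η 1).const_mul C
    have h2 := (intg0E hV hρ₀ hgr η).const_mul C
    have := h1.add h2
    refine this.congr (Eventually.of_forall fun x => ?_)
    simp only [Pi.add_apply]
    ring
  refine hdom.mono' ((hV.mul (cont_g hV η)).aestronglyMeasurable) ?_
  refine Eventually.of_forall fun x => ?_
  rw [Real.norm_eq_abs, abs_mul, abs_of_nonneg (exp_pos _).le]
  have pos1 : 0 ≤ C * (‖x‖+1) * rexp (-V₀ x + ⟪x, η⟫) := by positivity
  rcases le_or_gt 0 (V₀ x) with h0 | h0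
  · rw [abs_of_nonneg h0]
    have key : V₀ x ≤ rexp (V₀ x / 2) := by
      have h4 := Real.add_one_le_exp (V₀ x / 4)
      have h5 := Real.exp_add (V₀ x/4) (V₀ x/4)
      have h6 : V₀ x/4 + V₀ x/4 = V₀ x/2 := by ring
      rw [h6] at h5
      nlinarith [sq_nonneg (V₀ x / 4 - 1), Real.exp_pos (V₀ x/4)]
    have h7 : V₀ x * rexp (-V₀ x + ⟪x,η⟫) ≤ rexp (-(V₀ x)/2 + ⟪x,η⟫) := by
      calc V₀ x * rexp (-V₀ x + ⟪x,η⟫) ≤ rexp (V₀ x/2) * rexp (-V₀ x + ⟪x,η⟫) :=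
            mul_le_mul_of_nonneg_right key (exp_pos _).le
        _ = rexp (-(V₀ x)/2 + ⟪x,η⟫) := by rw [← Real.exp_add]; congr 1; ring
    linarith
  · rw [abs_of_neg h0]
    have hb : -V₀ x ≤ C * (‖x‖+1) := by nlinarith [hgr x, norm_nonneg x, sq_nonneg ‖x‖]
    have h8 : -V₀ x * rexp (-V₀ x + ⟪x,η⟫) ≤ C*(‖x‖+1)*rexp (-V₀ x + ⟪x,η⟫) :=
      mul_le_mul_of_nonneg_right hb (exp_pos _).le
    linarith [exp_pos (-(V₀ x)/2 + ⟪x,η⟫)]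

end GibbsE

section PreGibbs
variable {V₀ : Euc d → ℝ}

lemma intgc (hN : NicePot V₀) (η : Euc d) (c : ℝ) (k : ℕ) :
    Integrable (fun x : Euc d => ‖x‖^k * rexp (-V₀ x + ⟪x, η⟫ + c * ‖x‖)) := by
  obtain ⟨ρ₀, C, hρ₀, hC, hgr⟩ := hN.ex
  refine (((integrable_poly_gauss k (ρ₀/4) (C + ‖η‖ + c) (by positivity)).const_mul
    (rexp C)).mono' ?_ ?_)
  · refine ((continuous_norm.pow k).mul (Continuous.rexp ?_)).aestronglyMeasurable
    exact ((hN.cont.neg).add (continuous_id.inner continuous_const)).add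
      (continuous_const.mul continuous_norm)
  · refine Eventually.of_forall fun x => ?_
    rw [norm_of_nonneg (by positivity)]
    have h1 : -V₀ x + ⟪x, η⟫ + c * ‖x‖ ≤ -(ρ₀/4) * ‖x‖^2 + (C + ‖η‖ + c) * ‖x‖ + C := by
      have h2 := hgr x
      have h3 : ⟪x, η⟫ ≤ ‖x‖ * ‖η‖ := real_inner_le_norm x η
      nlinarith
    calc ‖x‖^k * rexp (-V₀ x + ⟪x, η⟫ + c * ‖x‖)
        ≤ ‖x‖^k * rexp (-(ρ₀/4) * ‖x‖^2 + (C + ‖η‖ + c) * ‖x‖ + C) :=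
          mul_le_mul_of_nonneg_left (exp_le_exp.2 h1) (by positivity)
      _ = rexp C * (‖x‖^k * rexp (-(ρ₀/4) * ‖x‖^2 + (C + ‖η‖ + c) * ‖x‖)) := by
          rw [Real.exp_add]; ring

lemma int_energyN (hN : NicePot V₀) (η : Euc d) :
    Integrable (fun x : Euc d => V₀ x * rexp (-V₀ x + ⟪x, η⟫)) := by
  obtain ⟨ρ₀, C, hρ₀, hC, hgr⟩ := hN.ex
  exact int_energy hN.cont hρ₀ hC hgr η


end PreGibbs
section Gibbs
variable {V₀ : Euc d → ℝ}

lemma intg (hN : NicePot V₀) (η : Euc d) (k : ℕ) :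
    Integrable (fun x : Euc d => ‖x‖^k * rexp (-V₀ x + ⟪x, η⟫)) := by
  have := intgc hN η 0 k
  refine this.congr (Eventually.of_forall fun x => by simp)

lemma intg0 (hN : NicePot V₀) (η : Euc d) :
    Integrable (fun x : Euc d => rexp (-V₀ x + ⟪x, η⟫)) := by
  have := intg hN η 0
  simpa using this

lemma intg_smul (hN : NicePot V₀) (η : Euc d) :
    Integrable (fun x : Euc d => rexp (-V₀ x + ⟪x, η⟫) • x) := by
  refine ((intg hN η 1).mono' ?_ ?_)
  · exact ((cont_g hN.cont η).smul continuous_id).aestronglyMeasurable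
  · refine Eventually.of_forall fun x => ?_
    rw [norm_smul, norm_of_nonneg (exp_pos _).le]
    simp [mul_comm]

lemma int_g_inner (hN : NicePot V₀) (η δ : Euc d) :
    Integrable (fun x : Euc d => rexp (-V₀ x + ⟪x, η⟫) * ⟪x, δ⟫) := by
  refine ((intg hN η 1).const_mul ‖δ‖).mono' ?_ ?_
  · exact ((cont_g hN.cont η).mul (continuous_id.inner continuous_const)).aestronglyMeasurable
  · refine Eventually.of_forall fun x => ?_
    rw [Real.norm_eq_abs, abs_mul, abs_of_nonneg (exp_pos _).le]
    have h1 : |⟪x, δ⟫| ≤ ‖x‖ * ‖δ‖ := abs_real_inner_le_norm x δ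
    calc rexp (-V₀ x + ⟪x, η⟫) * |⟪x, δ⟫| ≤ rexp (-V₀ x + ⟪x, η⟫) * (‖x‖ * ‖δ‖) :=
          mul_le_mul_of_nonneg_left h1 (exp_pos _).le
      _ = ‖δ‖ * (‖x‖^1 * rexp (-V₀ x + ⟪x, η⟫)) := by ring

instance : NeZero (volume : Measure (Euc d)) :=
  ⟨Measure.measure_univ_pos.mp (isOpen_univ.measure_pos _ ⟨0, trivial⟩)⟩

lemma Zf_pos (hN : NicePot V₀) (η : Euc d) : 0 < Zf V₀ η :=
  integral_exp_pos (intg0 hN η)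

lemma int_inner_eq (hN : NicePot V₀) (η δ : Euc d) :
    ∫ x, rexp (-V₀ x + ⟪x, η⟫) * ⟪x, δ⟫ = ⟪Mf V₀ η, δ⟫ := by
  have h1 := integral_inner (𝕜 := ℝ) (intg_smul hN η) δ
  have e : (fun x : Euc d => rexp (-V₀ x + ⟪x, η⟫) * ⟪x, δ⟫)
      = fun x => ⟪δ, rexp (-V₀ x + ⟪x, η⟫) • x⟫ := by
    funext x
    rw [real_inner_smul_right δ x, real_inner_comm x δ]
  rw [e, h1, real_inner_comm]; rfl

lemma Mf_inner (hN : NicePot V₀) (η δ : Euc d) :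
    ⟪Mf V₀ η, δ⟫ = Zf V₀ η * ⟪meanf V₀ η, δ⟫ := by
  rw [meanf, real_inner_smul_left]
  field_simp [(Zf_pos hN η).ne']

lemma jensen (hN : NicePot V₀) (η ζ : Euc d) :
    Sf V₀ η + ⟪meanf V₀ η, ζ - η⟫ ≤ Sf V₀ ζ := by
  have hZη := Zf_pos hN η
  have hZζ := Zf_pos hN ζ
  obtain ⟨cb, hcb⟩ : ∃ cb : ℝ, cb = ⟪meanf V₀ η, ζ - η⟫ := ⟨_, rfl⟩
  have key : rexp cb * Zf V₀ η ≤ Zf V₀ ζ := by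
    have hint : Integrable (fun x : Euc d =>
        rexp cb * (rexp (-V₀ x + ⟪x, η⟫) * ((1 - cb) + ⟪x, ζ - η⟫))) := by
      have := ((intg0 hN η).const_mul (1 - cb)).add (int_g_inner hN η (ζ - η))
      refine (this.const_mul (rexp cb)).congr (Eventually.of_forall fun x => ?_)
      simp only [Pi.add_apply]; ring
    have hle : ∀ x : Euc d, rexp cb * (rexp (-V₀ x + ⟪x, η⟫) * ((1 - cb) + ⟪x, ζ - η⟫))
        ≤ rexp (-V₀ x + ⟪x, ζ⟫) := by
      intro x
      have h1 : rexp (-V₀ x + ⟪x, ζ⟫) = rexp (-V₀ x + ⟪x, η⟫) * rexp ⟪x, ζ - η⟫ := by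
        rw [← Real.exp_add]; congr 1; rw [inner_sub_right]; ring
      have h2 : rexp cb * ((1 - cb) + ⟪x, ζ - η⟫) ≤ rexp ⟪x, ζ - η⟫ := by
        have h3 := Real.add_one_le_exp (⟪x, ζ - η⟫ - cb)
        have h4 := mul_le_mul_of_nonneg_left h3 (exp_pos cb).le
        rw [← Real.exp_add] at h4
        calc rexp cb * ((1 - cb) + ⟪x, ζ - η⟫) = rexp cb * (⟪x, ζ - η⟫ - cb + 1) := by ring
          _ ≤ rexp (cb + (⟪x, ζ - η⟫ - cb)) := h4
          _ = rexp ⟪x, ζ - η⟫ := by congr 1; ring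
      calc rexp cb * (rexp (-V₀ x + ⟪x, η⟫) * ((1 - cb) + ⟪x, ζ - η⟫))
          = rexp (-V₀ x + ⟪x, η⟫) * (rexp cb * ((1 - cb) + ⟪x, ζ - η⟫)) := by ring
        _ ≤ rexp (-V₀ x + ⟪x, η⟫) * rexp ⟪x, ζ - η⟫ :=
            mul_le_mul_of_nonneg_left h2 (exp_pos _).le
        _ = rexp (-V₀ x + ⟪x, ζ⟫) := h1.symm
    have hmono := integral_mono hint (intg0 hN ζ) hle
    have hcalc : ∫ x : Euc d, rexp cb * (rexp (-V₀ x + ⟪x, η⟫) * ((1 - cb) + ⟪x, ζ - η⟫))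
        = rexp cb * Zf V₀ η := by
      rw [integral_const_mul]
      have hsplit : ∫ x : Euc d, rexp (-V₀ x + ⟪x, η⟫) * ((1 - cb) + ⟪x, ζ - η⟫)
          = (1 - cb) * Zf V₀ η + ⟪Mf V₀ η, ζ - η⟫ := by
        have e1 : ∀ x : Euc d, rexp (-V₀ x + ⟪x, η⟫) * ((1 - cb) + ⟪x, ζ - η⟫)
            = (1 - cb) * rexp (-V₀ x + ⟪x, η⟫) + rexp (-V₀ x + ⟪x, η⟫) * ⟪x, ζ - η⟫ := by
          intro x; ring
        simp only [e1]
        rw [integral_add ((intg0 hN η).const_mul (1-cb)) (int_g_inner hN η (ζ - η)),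
          integral_const_mul, int_inner_eq hN η (ζ - η)]
        rfl
      rw [hsplit, Mf_inner hN, ← hcb]
      ring
    rw [hcalc] at hmono
    exact hmono
  have hlog := Real.log_le_log (by positivity) key
  rw [Real.log_mul (exp_ne_zero cb) hZη.ne', Real.log_exp] at hlog
  rw [Sf, Sf, ← hcb]
  linarith

lemma lip_helper {f g : ℝ → ℝ} {K : ℝ} {s : Set ℝ} (hK : 0 ≤ K) (hs : Convex ℝ s)
    (hf : ∀ t ∈ s, HasDerivAt f (g t) t) (hb : ∀ t ∈ s, |g t| ≤ K) :
    LipschitzOnWith (Real.nnabs K) f s := by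
  refine Convex.lipschitzOnWith_of_nnnorm_hasFDerivWithin_le
    (f' := fun t => ContinuousLinearMap.smulRight (1 : ℝ →L[ℝ] ℝ) (g t))
    (fun t ht => (hasDerivAt_iff_hasFDerivAt.mp (hf t ht)).hasFDerivWithinAt)
    (fun t ht => ?_) hs
  rw [← NNReal.coe_le_coe]
  have h1 : ‖ContinuousLinearMap.smulRight (1 : ℝ →L[ℝ] ℝ) (g t)‖ = ‖g t‖ := by
    rw [ContinuousLinearMap.norm_smulRight_apply]
    simp [ContinuousLinearMap.one_def, ContinuousLinearMap.norm_id]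
  have h2 : ((Real.nnabs K : ℝ≥0) : ℝ) = K := by
    simp [Real.coe_nnabs, abs_of_nonneg hK]
  rw [h2]
  calc ((‖ContinuousLinearMap.smulRight (1 : ℝ →L[ℝ] ℝ) (g t)‖₊ : ℝ≥0) : ℝ)
      = ‖g t‖ := by rw [coe_nnnorm, h1]
    _ ≤ K := by rw [Real.norm_eq_abs]; exact hb t ht

lemma Z_line_deriv (hN : NicePot V₀) (η v : Euc d) :
    HasDerivAt (fun t : ℝ => Zf V₀ (η + t • v)) ⟪Mf V₀ η, v⟫ 0 := by
  have hinner : ∀ (t : ℝ) (x : Euc d), ⟪x, η + t • v⟫ = ⟪x, η⟫ + t * ⟪x, v⟫ := by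
    intro t x; rw [inner_add_right, real_inner_smul_right]
  have key := hasDerivAt_integral_of_dominated_loc_of_lip (μ := (volume : Measure (Euc d)))
    (F := fun (t : ℝ) (x : Euc d) => rexp (-V₀ x + ⟪x, η + t • v⟫))
    (F' := fun x : Euc d => rexp (-V₀ x + ⟪x, η⟫) * ⟪x, v⟫)
    (x₀ := (0:ℝ))
    (bound := fun x : Euc d => ‖v‖ * (‖x‖^1 * rexp (-V₀ x + ⟪x, η⟫ + ‖v‖ * ‖x‖)))
    (s := Metric.ball 0 1) (Metric.ball_mem_nhds 0 one_pos)
    (Eventually.of_forall fun t => (cont_g hN.cont (η + t • v)).aestronglyMeasurable)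
    (by simpa using intg0 hN η)
    (((cont_g hN.cont η).mul (continuous_id.inner continuous_const)).aestronglyMeasurable)
    ?_ ((intgc hN η ‖v‖ 1).const_mul ‖v‖) ?_
  · have h1 : (∫ x, rexp (-V₀ x + ⟪x, η⟫) * ⟪x, v⟫) = ⟪Mf V₀ η, v⟫ := int_inner_eq hN η v
    rw [h1] at key
    exact key.2
  · -- Lipschitz
    refine Eventually.of_forall fun x => ?_
    have hb : 0 ≤ ‖v‖ * (‖x‖^1 * rexp (-V₀ x + ⟪x, η⟫ + ‖v‖ * ‖x‖)) := by positivity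
    refine lip_helper hb (convex_ball 0 1)
      (g := fun t => rexp (-V₀ x + ⟪x, η⟫ + t * ⟪x, v⟫) * ⟪x, v⟫) (fun t ht => ?_) (fun t ht => ?_)
    · have hd1 : HasDerivAt (fun s : ℝ => -V₀ x + ⟪x, η⟫ + s * ⟪x, v⟫) ⟪x, v⟫ t :=
        (hasDerivAt_mul_const ⟪x, v⟫).const_add (-V₀ x + ⟪x, η⟫)
      have h2 := hd1.exp
      refine HasDerivAt.congr_of_eventuallyEq h2 (Eventually.of_forall fun s => ?_)
      show rexp (-V₀ x + ⟪x, η + s • v⟫) = rexp (-V₀ x + ⟪x, η⟫ + s * ⟪x, v⟫)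
      rw [hinner s x]; congr 1; ring
    · rw [Metric.mem_ball, Real.dist_eq, sub_zero] at ht
      rw [abs_mul, abs_of_nonneg (exp_pos _).le]
      have h1 : |⟪x, v⟫| ≤ ‖x‖ * ‖v‖ := abs_real_inner_le_norm x v
      have h2 : t * ⟪x, v⟫ ≤ ‖v‖ * ‖x‖ := by
        calc t * ⟪x, v⟫ ≤ |t * ⟪x, v⟫| := le_abs_self _
          _ = |t| * |⟪x, v⟫| := abs_mul _ _
          _ ≤ 1 * (‖x‖ * ‖v‖) := by
              apply mul_le_mul ht.le h1 (abs_nonneg _) zero_le_one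
          _ = ‖v‖ * ‖x‖ := by ring
      calc rexp (-V₀ x + ⟪x, η⟫ + t * ⟪x, v⟫) * |⟪x, v⟫|
          ≤ rexp (-V₀ x + ⟪x, η⟫ + ‖v‖ * ‖x‖) * (‖x‖ * ‖v‖) := by
            apply mul_le_mul (exp_le_exp.2 (by linarith)) h1 (abs_nonneg _) (exp_pos _).le
        _ = ‖v‖ * (‖x‖^1 * rexp (-V₀ x + ⟪x, η⟫ + ‖v‖ * ‖x‖)) := by ring
  · -- pointwise derivative
    refine Eventually.of_forall fun x => ?_
    have hd1 : HasDerivAt (fun s : ℝ => -V₀ x + ⟪x, η⟫ + s * ⟪x, v⟫) ⟪x, v⟫ 0 :=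
      (hasDerivAt_mul_const ⟪x, v⟫).const_add (-V₀ x + ⟪x, η⟫)
    have h2 := hd1.exp
    simp only [zero_mul, add_zero] at h2
    refine HasDerivAt.congr_of_eventuallyEq h2 (Eventually.of_forall fun s => ?_)
    show rexp (-V₀ x + ⟪x, η + s • v⟫) = rexp (-V₀ x + ⟪x, η⟫ + s * ⟪x, v⟫)
    rw [hinner s x]; congr 1; ring

lemma S_line_deriv (hN : NicePot V₀) (η v : Euc d) :
    HasDerivAt (fun t : ℝ => Sf V₀ (η + t • v)) ⟪meanf V₀ η, v⟫ 0 := by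
  have hZ := Z_line_deriv hN η v
  have hne : Zf V₀ (η + (0:ℝ) • v) ≠ 0 := by
    have := Zf_pos hN (η + (0:ℝ) • v); linarith
  have := hZ.log hne
  have heq : ⟪Mf V₀ η, v⟫ / Zf V₀ (η + (0:ℝ) • v) = ⟪meanf V₀ η, v⟫ := by
    rw [show η + (0:ℝ) • v = η by simp, meanf, real_inner_smul_left, div_eq_inv_mul]
  rw [heq] at this
  exact this

end Gibbs

section Legendre
variable {V₀ : Euc d → ℝ}

lemma Sf_upper (hN : NicePot V₀) (R : ℝ) : ∃ SU : ℝ, ∀ η : Euc d, ‖η‖ ≤ R → Sf V₀ η ≤ SU := by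
  obtain ⟨ρ₀, C, hρ₀, hC, hgr⟩ := hN.ex
  refine ⟨Real.log (∫ x : Euc d, rexp (-(ρ₀/4) * ‖x‖^2 + (C+R)*‖x‖ + C)), fun η hη => ?_⟩
  have hint : Integrable (fun x : Euc d => rexp (-(ρ₀/4) * ‖x‖^2 + (C+R)*‖x‖ + C)) := by
    have h0 := (integrable_gauss_lin (d := d) (ρ₀/4) (C+R) (by positivity)).const_mul (rexp C)
    refine h0.congr (Eventually.of_forall fun x => ?_)
    show rexp C * rexp (-(ρ₀/4) * ‖x‖^2 + (C+R)*‖x‖) = rexp (-(ρ₀/4) * ‖x‖^2 + (C+R)*‖x‖ + C)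
    rw [← Real.exp_add]; congr 1; ring
  apply Real.log_le_log (Zf_pos hN η)
  refine integral_mono (intg0 hN η) hint fun x => ?_
  apply exp_le_exp.2
  have h3 : ⟪x, η⟫ ≤ ‖x‖ * ‖η‖ := real_inner_le_norm x η
  have h4 := hgr x
  have h5 : ‖x‖ * ‖η‖ ≤ ‖x‖ * R := mul_le_mul_of_nonneg_left hη (norm_nonneg x)
  nlinarith [norm_nonneg x]

lemma Sstar_nonempty (y : Euc d) :
    {r : ℝ | ∃ η : Euc d, r = ⟪η, y⟫ - Sf V₀ η}.Nonempty := ⟨_, ⟨0, rfl⟩⟩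

lemma Sstar_bound (hN : NicePot V₀) (hd : 1 ≤ d) (y : Euc d) :
    ∃ B : ℝ, ∀ η : Euc d, ⟪η, y⟫ - Sf V₀ η ≤ B := by
  obtain ⟨zmax, _, hmax⟩ := (isCompact_closedBall y (3/2)).exists_isMaxOn
    ⟨y, Metric.mem_closedBall_self (by norm_num)⟩ hN.cont.continuousOn
  obtain ⟨My, hMy⟩ : ∃ My : ℝ, My = V₀ zmax := ⟨_, rfl⟩
  have hMyb : ∀ x : Euc d, x ∈ Metric.closedBall y (3/2) → V₀ x ≤ My := fun x hx => hMy ▸ hmax hx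
  obtain ⟨κ, hκ⟩ : ∃ κ : ℝ, κ = (volume (Metric.ball (0:Euc d) (1/2))).toReal := ⟨_, rfl⟩
  have hκpos : 0 < κ := by
    rw [hκ]
    exact ENNReal.toReal_pos (Metric.measure_ball_pos volume _ (by norm_num : (0:ℝ) < 1/2)).ne'
      measure_ball_lt_top.ne
  refine ⟨My - Real.log κ, fun η => ?_⟩
  obtain ⟨u, hu1, huη⟩ : ∃ u : Euc d, ‖u‖ = 1 ∧ ⟪u, η⟫ = ‖η‖ := by
    rcases eq_or_ne η 0 with rfl | hη
    · refine ⟨EuclideanSpace.single (⟨0, by omega⟩ : Fin d) (1:ℝ), ?_, by simp⟩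
      rw [EuclideanSpace.norm_single]; norm_num
    · have hn : ‖η‖ ≠ 0 := norm_ne_zero_iff.2 hη
      refine ⟨‖η‖⁻¹ • η, ?_, ?_⟩
      · rw [norm_smul, norm_inv, norm_norm]
        exact inv_mul_cancel₀ hn
      · rw [real_inner_smul_left, real_inner_self_eq_norm_sq, pow_two, ← mul_assoc,
          inv_mul_cancel₀ hn, one_mul]
  have hball : ∀ x ∈ Metric.ball (y + u) (1/2),
      rexp (⟪y, η⟫ + ‖η‖/2 - My) ≤ rexp (-V₀ x + ⟪x, η⟫) := by
    intro x hx
    rw [Metric.mem_ball] at hx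
    have hdist : dist x y ≤ 3/2 := by
      have h1 : dist (y + u) y = 1 := by
        rw [dist_eq_norm, add_sub_cancel_left, hu1]
      calc dist x y ≤ dist x (y + u) + dist (y + u) y := dist_triangle _ _ _
        _ ≤ 3/2 := by rw [h1]; linarith
    have hV := hMyb x (Metric.mem_closedBall.2 hdist)
    have hinn : ⟪y, η⟫ + ‖η‖/2 ≤ ⟪x, η⟫ := by
      have h1 : ⟪x, η⟫ = ⟪y, η⟫ + ⟪u, η⟫ + ⟪x - (y + u), η⟫ := by
        rw [← inner_add_left, ← inner_add_left]; congr 1; abel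
      have h2 : |⟪x - (y + u), η⟫| ≤ ‖x - (y + u)‖ * ‖η‖ := abs_real_inner_le_norm _ _
      have h3 : ‖x - (y + u)‖ ≤ 1/2 := by
        rw [← dist_eq_norm]; exact hx.le
      have h4 : ‖x - (y + u)‖ * ‖η‖ ≤ (1/2) * ‖η‖ :=
        mul_le_mul_of_nonneg_right h3 (norm_nonneg η)
      have h5 := neg_abs_le ⟪x - (y + u), η⟫
      rw [h1, huη]
      nlinarith
    exact exp_le_exp.2 (by linarith)
  have hsub : κ * rexp (⟪y, η⟫ + ‖η‖/2 - My) ≤ Zf V₀ η := by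
    have h1 : ∫ _x in Metric.ball (y + u) (1/2), rexp (⟪y, η⟫ + ‖η‖/2 - My)
        ≤ ∫ x in Metric.ball (y + u) (1/2), rexp (-V₀ x + ⟪x, η⟫) :=
      setIntegral_mono_on (integrableOn_const measure_ball_lt_top.ne)
        ((intg0 hN η).integrableOn) measurableSet_ball hball
    have h2 : ∫ _x in Metric.ball (y + u) (1/2), rexp (⟪y, η⟫ + ‖η‖/2 - My)
        = κ * rexp (⟪y, η⟫ + ‖η‖/2 - My) := by
      rw [setIntegral_const, smul_eq_mul]
      congr 2
      rw [hκ]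
      exact congrArg ENNReal.toReal (Measure.addHaar_ball_center volume (y + u) (1/2))
    have h3 : ∫ x in Metric.ball (y + u) (1/2), rexp (-V₀ x + ⟪x, η⟫) ≤ Zf V₀ η :=
      setIntegral_le_integral (intg0 hN η) (Eventually.of_forall fun x => (exp_pos _).le)
    linarith
  have hlog : Real.log κ + (⟪y, η⟫ + ‖η‖/2 - My) ≤ Sf V₀ η := by
    have h1 := Real.log_le_log (by positivity) hsub
    rw [Real.log_mul hκpos.ne' (exp_ne_zero _), Real.log_exp] at h1
    exact h1
  have hcomm : ⟪η, y⟫ = ⟪y, η⟫ := real_inner_comm _ _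
  nlinarith [norm_nonneg η]

lemma le_Sstar (hN : NicePot V₀) (hd : 1 ≤ d) (η y : Euc d) :
    ⟪η, y⟫ - Sf V₀ η ≤ SstarF V₀ y := by
  obtain ⟨B, hB⟩ := Sstar_bound hN hd y
  exact le_csSup ⟨B, fun r ⟨ζ, hζ⟩ => hζ ▸ hB ζ⟩ ⟨η, rfl⟩

lemma Sstar_le {B : ℝ} (y : Euc d) (hB : ∀ η : Euc d, ⟪η, y⟫ - Sf V₀ η ≤ B) :
    SstarF V₀ y ≤ B :=
  csSup_le (Sstar_nonempty y) (fun r ⟨ζ, hζ⟩ => hζ ▸ hB ζ)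

lemma Sstar_convex (hN : NicePot V₀) (hd : 1 ≤ d) : ConvexOn ℝ Set.univ (SstarF V₀) := by
  refine ⟨convex_univ, fun y1 _ y2 _ a b ha hb hab => ?_⟩
  refine Sstar_le _ (fun η => ?_)
  have h1 : ⟪η, a • y1 + b • y2⟫ - Sf V₀ η
      = a * (⟪η, y1⟫ - Sf V₀ η) + b * (⟪η, y2⟫ - Sf V₀ η) := by
    rw [inner_add_right, real_inner_smul_right, real_inner_smul_right]
    have habe : a + b = 1 := hab
    linear_combination (Sf V₀ η) * habe
  rw [h1, smul_eq_mul, smul_eq_mul]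
  have h2 := mul_le_mul_of_nonneg_left (le_Sstar hN hd η y1) ha
  have h3 := mul_le_mul_of_nonneg_left (le_Sstar hN hd η y2) hb
  linarith

lemma Sstar_at_mean (hN : NicePot V₀) (hd : 1 ≤ d) (η : Euc d) :
    SstarF V₀ (meanf V₀ η) = ⟪η, meanf V₀ η⟫ - Sf V₀ η := by
  refine le_antisymm (Sstar_le _ fun ζ => ?_) (le_Sstar hN hd η _)
  have hj := jensen hN η ζ
  have h1 : ⟪meanf V₀ η, ζ - η⟫ = ⟪ζ, meanf V₀ η⟫ - ⟪η, meanf V₀ η⟫ := by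
    rw [inner_sub_right, real_inner_comm (meanf V₀ η) ζ, real_inner_comm (meanf V₀ η) η]
  linarith [hj, h1.symm.le, h1.le]

lemma exists_fixed (hN : NicePot V₀) (hd : 1 ≤ d)
    (h : Euc d → ℝ) (hh : ContDiff ℝ 2 h) (Kh : ℝ≥0) (hhLip : LipschitzWith Kh h)
    (θ : Euc d) : ∃ ys : Euc d, meanf V₀ (θ - gradient h ys) = ys := by
  have hScont : Continuous (SstarF V₀) :=
    continuousOn_univ.mp ((Sstar_convex hN hd).continuousOn isOpen_univ)
  have hhc : Continuous h := hh.continuous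
  obtain ⟨Ψ, hΨ⟩ : ∃ Ψ : Euc d → ℝ, Ψ = fun y => h y - ⟪θ, y⟫ + SstarF V₀ y := ⟨_, rfl⟩
  have hΨcont : Continuous Ψ := by
    rw [hΨ]
    exact ((hhc.sub (continuous_const.inner continuous_id)).add hScont)
  -- coercivity
  obtain ⟨c, hc⟩ : ∃ c : ℝ, ∀ y : Euc d, ‖y‖ - c ≤ Ψ y := by
    obtain ⟨R, hR⟩ : ∃ R : ℝ, R = (Kh:ℝ) + ‖θ‖ + 1 := ⟨_, rfl⟩
    have hRpos : 0 < R := by rw [hR]; positivity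
    obtain ⟨SU, hSU⟩ := Sf_upper hN R
    refine ⟨SU - h 0, fun y => ?_⟩
    have hSs : R * ‖y‖ - SU ≤ SstarF V₀ y := by
      rcases eq_or_ne y 0 with rfl | hy
      · have h1 := le_Sstar hN hd 0 (0:Euc d)
        have h2 := hSU 0 (by simp; positivity)
        simp only [inner_zero_left, zero_sub] at h1
        simp only [norm_zero, mul_zero, zero_sub]
        linarith
      · have h1 := le_Sstar hN hd (R • (‖y‖⁻¹ • y)) y
        have h2 : ⟪R • (‖y‖⁻¹ • y), y⟫ = R * ‖y‖ := by
          rw [real_inner_smul_left, real_inner_smul_left, real_inner_self_eq_norm_sq]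
          have : ‖y‖ ≠ 0 := norm_ne_zero_iff.2 hy
          field_simp [pow_two]
        have h3 : ‖R • (‖y‖⁻¹ • y)‖ ≤ R := by
          rw [norm_smul, norm_smul, norm_inv, norm_norm, Real.norm_eq_abs,
            abs_of_pos hRpos]
          have : ‖y‖ ≠ 0 := norm_ne_zero_iff.2 hy
          field_simp
          exact le_rfl
        have h4 := hSU _ h3
        rw [h2] at h1
        linarith
    have hLip := hhLip.dist_le_mul y 0
    rw [dist_eq_norm, dist_eq_norm, sub_zero, Real.norm_eq_abs] at hLip
    have h5 : h 0 - (Kh:ℝ) * ‖y‖ ≤ h y := by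
      have h9 := abs_le.1 hLip
      linarith [h9.1]
    have h6 : ⟪θ, y⟫ ≤ ‖θ‖ * ‖y‖ := real_inner_le_norm θ y
    rw [hΨ]
    show ‖y‖ - (SU - h 0) ≤ h y - ⟪θ, y⟫ + SstarF V₀ y
    have hRe : R * ‖y‖ = (Kh:ℝ) * ‖y‖ + ‖θ‖ * ‖y‖ + ‖y‖ := by rw [hR]; ring
    linarith
  -- minimum
  have hr1 : 0 ≤ |Ψ 0| + c := by
    have h1 := hc 0; simp at h1
    linarith [le_abs_self (Ψ 0)]
  obtain ⟨ys, hymem, hymin⟩ := (isCompact_closedBall (0:Euc d) (|Ψ 0| + c + 1)).exists_isMinOn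
    ⟨0, by simp; linarith⟩ hΨcont.continuousOn
  have hglobal : ∀ y : Euc d, Ψ ys ≤ Ψ y := by
    intro y
    rcases le_or_gt ‖y‖ (|Ψ 0| + c + 1) with hy | hy
    · exact hymin (by simpa [Metric.mem_closedBall, dist_eq_norm] using hy)
    · have h1 := hc y
      have h2 : Ψ ys ≤ Ψ 0 := hymin (by simp; linarith)
      have h3 := le_abs_self (Ψ 0)
      linarith
  -- now the first-order argument
  have hdiffh : ∀ y : Euc d, DifferentiableAt ℝ h y := fun y =>
    (hh.differentiable (by norm_num)).differentiableAt
  refine ⟨ys, ?_⟩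
  obtain ⟨G, hG⟩ : ∃ G : Euc d, G = gradient h ys := ⟨_, rfl⟩
  obtain ⟨ηs, hηs⟩ : ∃ ηs : Euc d, ηs = θ - G := ⟨_, rfl⟩
  -- h line derivative
  have hline : ∀ v : Euc d, HasDerivAt (fun s : ℝ => h (ys + s • v)) ⟪G, v⟫ 0 := by
    intro v
    have h1 : HasDerivAt (fun s : ℝ => ys + s • v) v 0 := by
      have h2 : HasDerivAt (fun s : ℝ => s • v) v 0 := by
        have := (hasDerivAt_id (0:ℝ)).smul_const v
        simpa using this
      simpa using h2.const_add ys
    have h3 : HasFDerivAt h ((InnerProductSpace.toDual ℝ (Euc d)) (gradient h ys))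
        (ys + (0:ℝ) • v) := by
      simpa using (hdiffh ys).hasGradientAt.hasFDerivAt
    have h4 := h3.comp_hasDerivAt 0 h1
    have h5 : (InnerProductSpace.toDual ℝ (Euc d)) (gradient h ys) v = ⟪G, v⟫ := by
      rw [InnerProductSpace.toDual_apply_apply, hG]
    rw [← h5]
    exact h4
  -- Step 1 : subgradient of Sstar at ys
  have step1 : ∀ v : Euc d, ⟪ηs, v⟫ ≤ SstarF V₀ (ys + v) - SstarF V₀ ys := by
    intro v
    have hlim : Tendsto (fun s : ℝ => ⟪θ, v⟫ - (h (ys + s • v) - h ys)/s) (𝓝[>] 0)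
        (𝓝 (⟪θ, v⟫ - ⟪G, v⟫)) := by
      have h1 := hasDerivAt_iff_tendsto_slope.mp (hline v)
      have h2 : Tendsto (slope (fun s : ℝ => h (ys + s • v)) 0) (𝓝[>] 0) (𝓝 ⟪G, v⟫) :=
        h1.mono_left (nhdsWithin_mono 0 fun s hs => ne_of_gt hs)
      have h3 : Tendsto (fun s : ℝ => (h (ys + s • v) - h ys)/s) (𝓝[>] 0) (𝓝 ⟪G, v⟫) := by
        refine h2.congr fun s => ?_
        rw [slope_def_field, sub_zero]
        simp
      exact (tendsto_const_nhds.sub h3)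
    have hηv : ⟪ηs, v⟫ = ⟪θ, v⟫ - ⟪G, v⟫ := by rw [hηs, inner_sub_left]
    rw [hηv]
    refine le_of_tendsto hlim ?_
    filter_upwards [Ioc_mem_nhdsGT (zero_lt_one)] with s hs
    obtain ⟨hs0, hs1⟩ := hs
    -- from minimality
    have hmin : h ys - ⟪θ, ys⟫ + SstarF V₀ ys
        ≤ h (ys + s • v) - ⟪θ, ys + s • v⟫ + SstarF V₀ (ys + s • v) := by
      have h9 := hglobal (ys + s • v)
      rw [hΨ] at h9
      exact h9
    have hsplit : ⟪θ, ys + s • v⟫ = ⟪θ, ys⟫ + s * ⟪θ, v⟫ := by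
      rw [inner_add_right, real_inner_smul_right]
    -- convexity of Sstar along segment
    have hconv := (Sstar_convex hN hd).2 (Set.mem_univ (ys + v)) (Set.mem_univ ys)
      hs0.le (by linarith : (0:ℝ) ≤ 1 - s) (by ring)
    have hcomb : s • (ys + v) + (1 - s) • ys = ys + s • v := by
      rw [smul_add, add_assoc]
      rw [add_comm (s • v) ((1-s) • ys), ← add_assoc, ← add_smul]
      simp
    rw [hcomb, smul_eq_mul, smul_eq_mul] at hconv
    -- combine
    have hfin : s * ⟪θ, v⟫ - (h (ys + s • v) - h ys)
        ≤ s * (SstarF V₀ (ys + v) - SstarF V₀ ys) := by nlinarith [hmin, hconv, hsplit]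
    have hkey : (⟪θ, v⟫ - (SstarF V₀ (ys + v) - SstarF V₀ ys)) * s ≤ h (ys + s • v) - h ys := by
      nlinarith [hfin]
    have hdiv := (le_div_iff₀ hs0).2 hkey
    linarith
  -- Step 2 & 3
  obtain ⟨mt, hmt⟩ : ∃ mt : Euc d, mt = meanf V₀ ηs := ⟨_, rfl⟩
  have step2 : SstarF V₀ mt = ⟪ηs, mt⟫ - Sf V₀ ηs := by
    rw [hmt]; exact Sstar_at_mean hN hd ηs
  have step3 : SstarF V₀ ys = ⟪ηs, ys⟫ - Sf V₀ ηs := by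
    have h1 := step1 (mt - ys)
    rw [add_sub_cancel] at h1
    have h2 := le_Sstar hN hd ηs ys
    have h3 : ⟪ηs, mt - ys⟫ = ⟪ηs, mt⟫ - ⟪ηs, ys⟫ := inner_sub_right ηs mt ys
    linarith [step2]
  -- Step 4
  have step4 : ∀ t : ℝ, ⟪ηs + t • (ys - mt), ys⟫ - Sf V₀ (ηs + t • (ys - mt))
      ≤ ⟪ηs, ys⟫ - Sf V₀ ηs := by
    intro t
    rw [← step3]
    exact le_Sstar hN hd _ ys
  have hD : HasDerivAt (fun t : ℝ => ⟪ηs + t • (ys - mt), ys⟫ - Sf V₀ (ηs + t • (ys - mt)))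
      (⟪ys - mt, ys⟫ - ⟪meanf V₀ ηs, ys - mt⟫) 0 := by
    have h1 : HasDerivAt (fun t : ℝ => ⟪ηs + t • (ys - mt), ys⟫) ⟪ys - mt, ys⟫ 0 := by
      have h2 : HasDerivAt (fun t : ℝ => ⟪ηs, ys⟫ + t * ⟪ys - mt, ys⟫) ⟪ys - mt, ys⟫ 0 :=
        (hasDerivAt_mul_const ⟪ys - mt, ys⟫).const_add ⟪ηs, ys⟫
      refine HasDerivAt.congr_of_eventuallyEq h2 (Eventually.of_forall fun t => ?_)
      show ⟪ηs + t • (ys - mt), ys⟫ = ⟪ηs, ys⟫ + t * ⟪ys - mt, ys⟫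
      rw [inner_add_left, real_inner_smul_left]
    exact h1.sub (S_line_deriv hN ηs (ys - mt))
  have hmax0 : IsLocalMax (fun t : ℝ => ⟪ηs + t • (ys - mt), ys⟫
      - Sf V₀ (ηs + t • (ys - mt))) 0 := by
    refine Eventually.of_forall fun t => ?_
    have h5 := step4 t
    simpa using h5
  have hzero := hmax0.hasDerivAt_eq_zero hD
  have hself : ⟪ys - mt, ys - mt⟫ = (0:ℝ) := by
    have h1 : ⟪meanf V₀ ηs, ys - mt⟫ = ⟪mt, ys - mt⟫ := by rw [hmt]
    have h2 : ⟪ys - mt, ys - mt⟫ = ⟪ys - mt, ys⟫ - ⟪ys - mt, mt⟫ := inner_sub_right _ _ _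
    have h3 : ⟪mt, ys - mt⟫ = ⟪ys - mt, mt⟫ := real_inner_comm _ _
    rw [h2]
    rw [h1, h3] at hzero
    linarith
  have hsub0 : ys - mt = 0 := by
    rwa [inner_self_eq_zero] at hself
  have hys : mt = ys := (sub_eq_zero.mp hsub0).symm
  have hfin2 : meanf V₀ (θ - gradient h ys) = mt := by rw [hmt, hηs, hG]
  rw [hfin2, hys]

end Legendre

section Density
variable {V₀ : Euc d → ℝ}

lemma rho_pos (hN : NicePot V₀) (η x : Euc d) : 0 < rhoF V₀ η x :=
  div_pos (exp_pos _) (Zf_pos hN η)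

lemma int_rho (hN : NicePot V₀) (η : Euc d) : Integrable (rhoF V₀ η) :=
  (intg0 hN η).div_const _

lemma rho_total (hN : NicePot V₀) (η : Euc d) : (∫ x, rhoF V₀ η x) = 1 := by
  simp only [rhoF]
  rw [integral_div]
  exact div_self (Zf_pos hN η).ne'

lemma log_rho (hN : NicePot V₀) (η x : Euc d) :
    Real.log (rhoF V₀ η x) = -V₀ x + ⟪x, η⟫ - Real.log (Zf V₀ η) := by
  simp only [rhoF]
  rw [Real.log_div (exp_ne_zero _) (Zf_pos hN η).ne', Real.log_exp]

lemma rho_admissible (hN : NicePot V₀) (η : Euc d) : AdmissibleDensity V₀ (rhoF V₀ η) := by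
  constructor
  · exact ((cont_g hN.cont η).div_const _).measurable
  · exact fun x => (rho_pos hN η x).le
  · exact rho_total hN η
  · refine ((intg hN η 2).div_const (Zf V₀ η)).congr (Eventually.of_forall fun x => ?_)
    simp only [rhoF]; ring
  · have hint : Integrable (fun x : Euc d =>
        (-(V₀ x * rexp (-V₀ x + ⟪x, η⟫)) + rexp (-V₀ x + ⟪x, η⟫) * ⟪x, η⟫
          - Real.log (Zf V₀ η) * rexp (-V₀ x + ⟪x, η⟫)) / Zf V₀ η) :=
      (((int_energyN hN η).neg.add (int_g_inner hN η η)).sub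
        ((intg0 hN η).const_mul (Real.log (Zf V₀ η)))).div_const _
    refine hint.congr (Eventually.of_forall fun x => ?_)
    have e1 : rhoF V₀ η x * Real.log (rhoF V₀ η x)
        = (-(V₀ x * rexp (-V₀ x + ⟪x, η⟫)) + rexp (-V₀ x + ⟪x, η⟫) * ⟪x, η⟫
          - Real.log (Zf V₀ η) * rexp (-V₀ x + ⟪x, η⟫)) / Zf V₀ η := by
      rw [log_rho hN η x]
      simp only [rhoF]
      ring
    exact e1.symm
  · refine ((int_energyN hN η).div_const (Zf V₀ η)).congr (Eventually.of_forall fun x => ?_)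
    simp only [rhoF]; ring

lemma densMean_rho (hN : NicePot V₀) (η : Euc d) :
    densMean (rhoF V₀ η) = meanf V₀ η := by
  rw [densMean, meanf]
  have e : (fun x : Euc d => rhoF V₀ η x • x)
      = fun x => (Zf V₀ η)⁻¹ • (rexp (-V₀ x + ⟪x, η⟫) • x) := by
    funext x
    simp only [rhoF]
    rw [smul_smul, div_eq_inv_mul]
  rw [e, integral_smul]
  rfl

lemma adm_integrable {μ : Euc d → ℝ} (hμ : AdmissibleDensity V₀ μ) : Integrable μ := by
  by_contra hint
  have h1 := hμ.total
  rw [integral_undef hint] at h1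
  norm_num at h1

lemma adm_mom1 {μ : Euc d → ℝ} (hμ : AdmissibleDensity V₀ μ) :
    Integrable (fun x => μ x * ‖x‖) := by
  refine ((adm_integrable hμ).add hμ.mom2).mono'
    ((hμ.meas.mul measurable_norm).aestronglyMeasurable) (Eventually.of_forall fun x => ?_)
  rw [Real.norm_eq_abs, abs_mul, abs_of_nonneg (hμ.nonneg x), abs_of_nonneg (norm_nonneg x),
    Pi.add_apply]
  have h1 : ‖x‖ ≤ 1 + ‖x‖^2 := by nlinarith [sq_nonneg (‖x‖ - 1), norm_nonneg x]
  nlinarith [hμ.nonneg x, norm_nonneg x]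

lemma adm_smul_int {μ : Euc d → ℝ} (hμ : AdmissibleDensity V₀ μ) :
    Integrable (fun x => μ x • x) := by
  refine (adm_mom1 hμ).mono'
    (hμ.meas.aestronglyMeasurable.smul aestronglyMeasurable_id) (Eventually.of_forall fun x => ?_)
  rw [norm_smul, Real.norm_eq_abs, abs_of_nonneg (hμ.nonneg x)]

lemma adm_inner_int {μ : Euc d → ℝ} (hμ : AdmissibleDensity V₀ μ) (η : Euc d) :
    Integrable (fun x => μ x * ⟪x, η⟫) := by
  refine ((adm_mom1 hμ).const_mul ‖η‖).mono'
    ((hμ.meas.mul (continuous_id.inner continuous_const).measurable).aestronglyMeasurable)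
    (Eventually.of_forall fun x => ?_)
  rw [Real.norm_eq_abs, abs_mul, abs_of_nonneg (hμ.nonneg x)]
  have h1 : |⟪x, η⟫| ≤ ‖x‖ * ‖η‖ := abs_real_inner_le_norm x η
  calc μ x * |⟪x, η⟫| ≤ μ x * (‖x‖ * ‖η‖) :=
        mul_le_mul_of_nonneg_left h1 (hμ.nonneg x)
    _ = ‖η‖ * (μ x * ‖x‖) := by ring

lemma adm_inner_eq {μ : Euc d → ℝ} (hμ : AdmissibleDensity V₀ μ) (η : Euc d) :
    ∫ x, μ x * ⟪x, η⟫ = ⟪densMean μ, η⟫ := by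
  have h1 := integral_inner (𝕜 := ℝ) (adm_smul_int hμ) η
  have e : (fun x : Euc d => μ x * ⟪x, η⟫) = fun x => ⟪η, μ x • x⟫ := by
    funext x
    rw [real_inner_smul_right η x, real_inner_comm x η]
  rw [e, h1, real_inner_comm]
  rfl

lemma entropy_pt {m r : ℝ} (hm : 0 ≤ m) (hr : 0 < r) :
    0 ≤ m * Real.log m - m * Real.log r - m + r
      ∧ (m * Real.log m - m * Real.log r - m + r = 0 → m = r) := by
  rcases eq_or_lt_of_le hm with hm0 | hmpos
  · constructor
    · rw [← hm0]; simp; linarith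
    · intro h0; rw [← hm0] at h0; simp at h0; linarith
  · have hlog := Real.log_le_sub_one_of_pos (div_pos hr hmpos)
    rw [Real.log_div hr.ne' hmpos.ne'] at hlog
    have hmul := mul_le_mul_of_nonneg_left hlog hmpos.le
    have hdiv : m * (r/m) = r := by field_simp
    constructor
    · nlinarith
    · intro h0
      by_contra hne
      have hne' : r/m ≠ 1 := by
        intro hcon
        rw [div_eq_one_iff_eq hmpos.ne'] at hcon
        exact hne hcon.symm
      have hstrict := Real.log_lt_sub_one_of_pos (div_pos hr hmpos) hne'
      rw [Real.log_div hr.ne' hmpos.ne'] at hstrict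
      have hmul2 := (mul_lt_mul_iff_right₀ hmpos).2 hstrict
      nlinarith

lemma conv_grad_line {f : Euc d → ℝ} {y : Euc d} (hfd : DifferentiableAt ℝ f y) (v : Euc d) :
    HasDerivAt (fun s : ℝ => f (y + s • v)) ⟪gradient f y, v⟫ 0 := by
  have h1 : HasDerivAt (fun s : ℝ => y + s • v) v 0 := by
    have h2 : HasDerivAt (fun s : ℝ => s • v) v 0 := by
      have := (hasDerivAt_id (0:ℝ)).smul_const v
      simpa using this
    simpa using h2.const_add y
  have h3 : HasFDerivAt f ((InnerProductSpace.toDual ℝ (Euc d)) (gradient f y))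
      (y + (0:ℝ) • v) := by
    simpa using hfd.hasGradientAt.hasFDerivAt
  have h4 := h3.comp_hasDerivAt 0 h1
  have h5 : (InnerProductSpace.toDual ℝ (Euc d)) (gradient f y) v = ⟪gradient f y, v⟫ :=
    InnerProductSpace.toDual_apply_apply
  rw [← h5]
  exact h4

lemma conv_grad_ineq {f : Euc d → ℝ} (hf : ConvexOn ℝ Set.univ f) {y : Euc d}
    (hfd : DifferentiableAt ℝ f y) (z : Euc d) :
    f y + ⟪gradient f y, z - y⟫ ≤ f z := by
  have hline := conv_grad_line hfd (z - y)
  have h1 := hasDerivAt_iff_tendsto_slope.mp hline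
  have h2 : Tendsto (slope (fun s : ℝ => f (y + s • (z - y))) 0) (𝓝[>] 0)
      (𝓝 ⟪gradient f y, z - y⟫) :=
    h1.mono_left (nhdsWithin_mono 0 fun s hs => ne_of_gt hs)
  have h3 : Tendsto (fun s : ℝ => (f (y + s • (z - y)) - f y)/s) (𝓝[>] 0)
      (𝓝 ⟪gradient f y, z - y⟫) := by
    refine h2.congr fun s => ?_
    rw [slope_def_field, sub_zero]
    simp
  rw [← sub_nonneg]
  have hkey : ∀ s : ℝ, s ∈ Set.Ioc (0:ℝ) 1 → (f (y + s • (z - y)) - f y)/s ≤ f z - f y := by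
    intro s hs
    obtain ⟨hs0, hs1⟩ := hs
    have hconv := hf.2 (Set.mem_univ z) (Set.mem_univ y) hs0.le
      (by linarith : (0:ℝ) ≤ 1 - s) (by ring)
    have hcomb : s • z + (1 - s) • y = y + s • (z - y) := by
      rw [smul_sub]
      rw [sub_smul, one_smul]
      abel
    rw [hcomb, smul_eq_mul, smul_eq_mul] at hconv
    rw [div_le_iff₀ hs0]
    nlinarith
  have hle := le_of_tendsto h3 (by
    filter_upwards [Ioc_mem_nhdsGT (zero_lt_one)] with s hs
    exact hkey s hs)
  linarith

end Density

section Master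
variable {V₀ : Euc d → ℝ}

lemma freeEnergy_rho (hN : NicePot V₀) (h : Euc d → ℝ) (θ y : Euc d)
    (hfix : meanf V₀ (θ - gradient h y) = y) :
    freeEnergy V₀ h θ (rhoF V₀ (θ - gradient h y))
      = h y - ⟪gradient h y, y⟫ - Real.log (Zf V₀ (θ - gradient h y)) := by
  obtain ⟨η, hη⟩ : ∃ η : Euc d, η = θ - gradient h y := ⟨_, rfl⟩
  rw [← hη] at hfix ⊢
  have hρA := rho_admissible hN η
  have hdm : densMean (rhoF V₀ η) = y := (densMean_rho hN η).trans hfix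
  have i1 : Integrable (fun x => rhoF V₀ η x * V₀ x) := hρA.energy
  obtain ⟨LZ, hLZ⟩ : ∃ LZ : ℝ, LZ = Real.log (Zf V₀ η) := ⟨_, rfl⟩
  have hsplit : (∫ x, rhoF V₀ η x * (V₀ x - ⟪x, θ⟫))
      = (∫ x, rhoF V₀ η x * V₀ x) - ⟪y, θ⟫ := by
    have e : (fun x => rhoF V₀ η x * (V₀ x - ⟪x, θ⟫))
        = fun x => rhoF V₀ η x * V₀ x - rhoF V₀ η x * ⟪x, θ⟫ := funext fun x => by ring
    rw [e, integral_sub i1 (adm_inner_int hρA θ), adm_inner_eq hρA θ, hdm]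
  have hent : (∫ x, rhoF V₀ η x * Real.log (rhoF V₀ η x))
      = -(∫ x, rhoF V₀ η x * V₀ x) + ⟪y, η⟫ - LZ := by
    have e : (fun x => rhoF V₀ η x * Real.log (rhoF V₀ η x))
        = fun x => (-(rhoF V₀ η x * V₀ x) + rhoF V₀ η x * ⟪x, η⟫) - rhoF V₀ η x * LZ := by
      funext x
      rw [log_rho hN η x, ← hLZ]
      ring
    have ineg : Integrable (fun x : Euc d => -(rhoF V₀ η x * V₀ x)) := i1.neg
    have ia : Integrable (fun x : Euc d => -(rhoF V₀ η x * V₀ x) + rhoF V₀ η x * ⟪x, η⟫) :=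
      ineg.add (adm_inner_int hρA η)
    have ib : Integrable (fun x : Euc d => rhoF V₀ η x * LZ) := (int_rho hN η).mul_const LZ
    rw [e, integral_sub ia ib, integral_add ineg (adm_inner_int hρA η), integral_neg,
      adm_inner_eq hρA η, hdm, integral_mul_const, rho_total hN η]
    ring
  rw [freeEnergy, hsplit, hdm, hent, ← hLZ]
  have hGsub : ⟪y, θ⟫ - ⟪y, η⟫ = ⟪gradient h y, y⟫ := by
    have h1 : θ - η = gradient h y := by rw [hη]; abel
    rw [← inner_sub_right, h1, real_inner_comm]
  linarith

lemma master (hN : NicePot V₀) (h : Euc d → ℝ) (hhconv : ConvexOn ℝ Set.univ h)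
    (hhd : ∀ y : Euc d, DifferentiableAt ℝ h y) (θ y : Euc d)
    (hfix : meanf V₀ (θ - gradient h y) = y) {μ : Euc d → ℝ} (hμ : AdmissibleDensity V₀ μ) :
    freeEnergy V₀ h θ (rhoF V₀ (θ - gradient h y)) ≤ freeEnergy V₀ h θ μ ∧
      (freeEnergy V₀ h θ μ ≤ freeEnergy V₀ h θ (rhoF V₀ (θ - gradient h y)) →
        μ =ᵐ[volume] rhoF V₀ (θ - gradient h y)) := by
  have hFρ := freeEnergy_rho hN h θ y hfix
  obtain ⟨η, hη⟩ : ∃ η : Euc d, η = θ - gradient h y := ⟨_, rfl⟩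
  rw [← hη] at hfix hFρ ⊢
  obtain ⟨LZ, hLZ⟩ : ∃ LZ : ℝ, LZ = Real.log (Zf V₀ η) := ⟨_, rfl⟩
  rw [← hLZ] at hFρ
  have h1 : Integrable (fun x => μ x * Real.log (μ x)) := hμ.ent
  have h2 : Integrable (fun x => μ x * V₀ x) := hμ.energy
  have h3 : Integrable (fun x => μ x * ⟪x, η⟫) := adm_inner_int hμ η
  have h5 : Integrable μ := adm_integrable hμ
  have h4 : Integrable (fun x => μ x * LZ) := h5.mul_const LZ
  have h6 : Integrable (rhoF V₀ η) := int_rho hN η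
  obtain ⟨T, hT⟩ : ∃ T : Euc d → ℝ, T = fun x =>
      μ x * Real.log (μ x) + μ x * V₀ x - μ x * ⟪x, η⟫ + μ x * LZ - μ x + rhoF V₀ η x :=
    ⟨_, rfl⟩
  have hTid : ∀ x, T x = μ x * Real.log (μ x) - μ x * Real.log (rhoF V₀ η x)
      - μ x + rhoF V₀ η x := by
    intro x
    rw [hT, log_rho hN η x, ← hLZ]
    ring
  have hTnn : ∀ x, 0 ≤ T x := by
    intro x
    rw [hTid x]
    exact (entropy_pt (hμ.nonneg x) (rho_pos hN η x)).1
  have hA : Integrable (fun x : Euc d => μ x * Real.log (μ x) + μ x * V₀ x) := h1.add h2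
  have hBi : Integrable (fun x : Euc d =>
      μ x * Real.log (μ x) + μ x * V₀ x - μ x * ⟪x, η⟫) := hA.sub h3
  have hCi : Integrable (fun x : Euc d =>
      μ x * Real.log (μ x) + μ x * V₀ x - μ x * ⟪x, η⟫ + μ x * LZ) := hBi.add h4
  have hDi : Integrable (fun x : Euc d =>
      μ x * Real.log (μ x) + μ x * V₀ x - μ x * ⟪x, η⟫ + μ x * LZ - μ x) := hCi.sub h5
  have hTint : Integrable T := by
    rw [hT]
    exact hDi.add h6
  have hTval : (∫ x, T x) = (∫ x, μ x * Real.log (μ x)) + (∫ x, μ x * V₀ x)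
      - ⟪densMean μ, η⟫ + LZ := by
    rw [hT]
    rw [integral_add hDi h6, integral_sub hCi h5, integral_add hBi h4, integral_sub hA h3,
      integral_add h1 h2, adm_inner_eq hμ η, integral_mul_const, hμ.total, rho_total hN η]
    ring
  have hTpos : 0 ≤ ∫ x, T x := integral_nonneg hTnn
  have hFμ : freeEnergy V₀ h θ μ = (∫ x, T x) - LZ + h (densMean μ)
      - ⟪gradient h y, densMean μ⟫ := by
    have hsplit : (∫ x, μ x * (V₀ x - ⟪x, θ⟫))
        = (∫ x, μ x * V₀ x) - ⟪densMean μ, θ⟫ := by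
      have e : (fun x => μ x * (V₀ x - ⟪x, θ⟫))
          = fun x => μ x * V₀ x - μ x * ⟪x, θ⟫ := funext fun x => by ring
      rw [e, integral_sub h2 (adm_inner_int hμ θ), adm_inner_eq hμ θ]
    have hGsub : ⟪densMean μ, θ⟫ - ⟪densMean μ, η⟫ = ⟪gradient h y, densMean μ⟫ := by
      have hc : θ - η = gradient h y := by rw [hη]; abel
      rw [← inner_sub_right, hc, real_inner_comm]
    rw [freeEnergy, hsplit]
    linarith [hTval, hGsub]
  have hB := conv_grad_ineq hhconv (hhd y) (densMean μ)
  rw [inner_sub_right] at hB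
  constructor
  · rw [hFμ, hFρ]
    linarith
  · intro hle
    rw [hFμ, hFρ] at hle
    have hT0 : (∫ x, T x) = 0 := by linarith
    have hae : T =ᵐ[volume] 0 :=
      (integral_eq_zero_iff_of_nonneg (fun x => hTnn x) hTint).mp hT0
    filter_upwards [hae] with x hx
    refine (entropy_pt (hμ.nonneg x) (rho_pos hN η x)).2 ?_
    have := hTid x
    rw [hx] at this
    simp only [Pi.zero_apply] at this
    linarith [this]

end Master

/-- **Lemma (structure of the minimizer of `F_θ`).** For every `θ`: `F_θ` has a unique
(up to a.e. equality) global minimizer `ρ_{*,θ}`; it is given by the self-consistency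
equation `ρ_{*,θ}(x) ∝ exp(−V₀(x) + x·(θ − ∇h(y_θ)))` with `y_θ = m_{ρ_{*,θ}}`; `y_θ` is
the unique fixed point of `f_θ`; and `w(θ)` has the stated explicit expression. -/
theorem minimizer_structure
    (d : ℕ) (hd : 1 ≤ d)
    -- Assumption LSIN1
    (V₀ Vc Vb : Euc d → ℝ) (hV₀ : ContDiff ℝ 2 V₀) (hdec : ∀ x, V₀ x = Vc x + Vb x)
    (ρ₀ : ℝ) (hρ₀ : 0 < ρ₀) (hVc : StrongConvexOn Set.univ ρ₀ Vc)
    (Mb : ℝ) (hVb : ∀ x, |Vb x| ≤ Mb)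
    (h : Euc d → ℝ) (hh : ContDiff ℝ 2 h) (hhconv : ConvexOn ℝ Set.univ h)
    (Kh : ℝ≥0) (hhLip : LipschitzWith Kh h)
    (Kh' : ℝ≥0) (hhHess : LipschitzWith Kh' (gradient h))
    (κ : ℝ) (hκ : 0 < κ) :
    ∀ θ : Euc d, ∃ ρs : Euc d → ℝ, AdmissibleDensity V₀ ρs ∧
      -- ρs is a global minimizer of F_θ
      (∀ μ : Euc d → ℝ, AdmissibleDensity V₀ μ →
        freeEnergy V₀ h θ ρs ≤ freeEnergy V₀ h θ μ) ∧
      -- uniqueness of the minimizer up to a.e. equality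
      (∀ μ : Euc d → ℝ, AdmissibleDensity V₀ μ →
        (∀ ν : Euc d → ℝ, AdmissibleDensity V₀ ν →
          freeEnergy V₀ h θ μ ≤ freeEnergy V₀ h θ ν) →
        μ =ᵐ[volume] ρs) ∧
      -- self-consistency equation
      (∀ᵐ x ∂(volume : Measure (Euc d)),
        ρs x = Real.exp (-V₀ x + ⟪x, θ - gradient h (densMean ρs)⟫) /
          ∫ z, Real.exp (-V₀ z + ⟪z, θ - gradient h (densMean ρs)⟫)) ∧
      -- y_θ = m_{ρ_{*,θ}} is the unique fixed point of f_θ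
      ftheta V₀ h θ (densMean ρs) = densMean ρs ∧
      (∀ y : Euc d, ftheta V₀ h θ y = y → y = densMean ρs) ∧
      -- explicit formula for w
      wFun V₀ h κ θ = ‖θ‖ ^ 2 / (2 * κ) + h (densMean ρs)
        - ⟪gradient h (densMean ρs), densMean ρs⟫
        - Real.log (∫ x, Real.exp (-V₀ x + ⟪x, θ - gradient h (densMean ρs)⟫))     := by
  intro θ
  have hVcont : Continuous V₀ := hV₀.continuous
  obtain ⟨C, hC, hgrc⟩ := growth_of_strongconvex Vc Vb ρ₀ hρ₀ hVc Mb hVb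
  have hgr' : ∀ x : Euc d, ρ₀/4 * ‖x‖^2 - C*(‖x‖+1) ≤ V₀ x := fun x => by
    rw [hdec x]; exact hgrc x
  have hN : NicePot V₀ := ⟨hVcont, ρ₀, C, hρ₀, hC, hgr'⟩
  have hhd : ∀ y : Euc d, DifferentiableAt ℝ h y := fun y =>
    (hh.differentiable (by norm_num)).differentiableAt
  obtain ⟨ys, hfix⟩ := exists_fixed hN hd h hh Kh hhLip θ
  have hdm : densMean (rhoF V₀ (θ - gradient h ys)) = ys := (densMean_rho hN _).trans hfix
  refine ⟨rhoF V₀ (θ - gradient h ys), rho_admissible hN _, ?_, ?_, ?_, ?_, ?_, ?_⟩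
  · exact fun μ hμ => (master hN h hhconv hhd θ ys hfix hμ).1
  · intro μ hμ hmin
    exact (master hN h hhconv hhd θ ys hfix hμ).2 (hmin _ (rho_admissible hN _))
  · simp only [hdm]
    refine Eventually.of_forall fun x => ?_
    rfl
  · simp only [hdm]
    exact hfix
  · intro y hy
    have hy' : meanf V₀ (θ - gradient h y) = y := hy
    have hle := (master hN h hhconv hhd θ y hy' (rho_admissible hN (θ - gradient h ys))).1
    have heq : rhoF V₀ (θ - gradient h y) =ᵐ[volume] rhoF V₀ (θ - gradient h ys) :=
      (master hN h hhconv hhd θ ys hfix (rho_admissible hN (θ - gradient h y))).2 hle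
    have hdmy : densMean (rhoF V₀ (θ - gradient h y)) = y := (densMean_rho hN _).trans hy'
    have hsame : densMean (rhoF V₀ (θ - gradient h y))
        = densMean (rhoF V₀ (θ - gradient h ys)) := by
      rw [densMean, densMean]
      exact integral_congr_ae (heq.mono fun x hx => by simp only [hx])
    rw [← hdmy, hsame]
  · have hsinf : sInf {r : ℝ | ∃ ρ, AdmissibleDensity V₀ ρ ∧ r = freeEnergy V₀ h θ ρ}
        = freeEnergy V₀ h θ (rhoF V₀ (θ - gradient h ys)) := by
      apply le_antisymm
      · refine csInf_le ⟨freeEnergy V₀ h θ (rhoF V₀ (θ - gradient h ys)), ?_⟩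
          ⟨rhoF V₀ (θ - gradient h ys), rho_admissible hN _, rfl⟩
        rintro r ⟨μ, hμ, rfl⟩
        exact (master hN h hhconv hhd θ ys hfix hμ).1
      · refine le_csInf ⟨_, rhoF V₀ (θ - gradient h ys), rho_admissible hN _, rfl⟩ ?_
        rintro r ⟨μ, hμ, rfl⟩
        exact (master hN h hhconv hhd θ ys hfix hμ).1
    rw [wFun, hsinf, freeEnergy_rho hN h θ ys hfix, hdm]
    simp only [Zf]
    ring

end
end

section
/- Let w ∈ C²(ℝ^d, ℝ), θ* ∈ ℝ^d with ∇w(θ*) = 0, and η > 0. Suppose that for every θ ∈ ℝ^d at least one of the following holds: (i) ∇²w(θ) ≥ η·Id as quadratic forms, or (ii) (θ − θ*)·∇w(θ) ≥ η|θ − θ*|². Then (θ − θ*)·∇w(θ) ≥ η|θ − θ*|² for every θ ∈ ℝ^d. -/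
open MeasureTheory Real Filter Set
open scoped RealInnerProductSpace ENNReal NNReal

noncomputable section

/-- If at every point either the Hessian of `w` is bounded below by `η·Id`, or the radial
coercivity inequality `(θ − θ*)·∇w(θ) ≥ η|θ − θ*|²` holds, then the radial coercivity
inequality holds everywhere. -/
theorem coercivity_of_pointwise_alternative
    (d : ℕ) (hd : 1 ≤ d)
    (w : Euc d → ℝ) (hw : ContDiff ℝ 2 w)
    (θs : Euc d) (hcrit : gradient w θs = 0)
    (η : ℝ) (hη : 0 < η)
    (halt : ∀ θ : Euc d,
      (∀ v : Euc d, ⟪v, fderiv ℝ (gradient w) θ v⟫ ≥ η * ‖v‖ ^ 2) ∨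
      ⟪θ - θs, gradient w θ⟫ ≥ η * ‖θ - θs‖ ^ 2) :
    ∀ θ : Euc d, ⟪θ - θs, gradient w θ⟫ ≥ η * ‖θ - θs‖ ^ 2 := by
  have hgraddiff : Differentiable ℝ (gradient w) := by
    have h1 : ContDiff ℝ 1 (fderiv ℝ w) := hw.fderiv_right (by norm_num)
    have : gradient w = fun x => (InnerProductSpace.toDual ℝ (Euc d)).symm (fderiv ℝ w x) := rfl
    rw [this]
    exact (InnerProductSpace.toDual ℝ (Euc d)).symm.differentiable.comp (h1.differentiable one_ne_zero)
  intro θ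
  set v := θ - θs with hv
  set c : ℝ → Euc d := fun t => θs + t • v with hc
  have hcθ : c 1 = θ := by simp [hc, hv]
  set ψ : ℝ → ℝ := fun t => ⟪v, gradient w (c t)⟫ - t * (η * ‖v‖ ^ 2) with hψ
  have hcderiv : ∀ t : ℝ, HasDerivAt c v t := by
    intro t
    have : HasDerivAt (fun t : ℝ => t • v) ((1:ℝ) • v) t :=
      (hasDerivAt_id t).smul_const v
    simpa [hc] using this.const_add θs
  have hDψ : ∀ t : ℝ,
      HasDerivAt ψ (⟪v, fderiv ℝ (gradient w) (c t) v⟫ - η * ‖v‖ ^ 2) t := by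
    intro t
    have h1 : HasDerivAt (fun t => gradient w (c t))
        (fderiv ℝ (gradient w) (c t) v) t :=
      (hgraddiff (c t)).hasFDerivAt.comp_hasDerivAt t (hcderiv t)
    have h2 : HasDerivAt (fun t => ⟪v, gradient w (c t)⟫)
        (⟪v, fderiv ℝ (gradient w) (c t) v⟫) t := by
      simpa only [Function.comp_def, innerSL_apply_apply] using ((innerSL ℝ v).hasFDerivAt.comp_hasDerivAt t h1)
    have h3 : HasDerivAt (fun t : ℝ => t * (η * ‖v‖ ^ 2)) (η * ‖v‖ ^ 2) t := by
      simpa using (hasDerivAt_id t).mul_const (η * ‖v‖ ^ 2)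
    exact h2.sub h3
  have hψcont : Continuous ψ := by
    have : Differentiable ℝ ψ := fun t => (hDψ t).differentiableAt
    exact this.continuous
  have hψ0 : ψ 0 = 0 := by simp only [hψ, hc, zero_smul, add_zero, hcrit, inner_zero_right, zero_mul, sub_zero]
  -- key: if t > 0 and ψ t < 0 then the derivative of ψ at t is nonneg
  have key : ∀ t : ℝ, 0 < t → ψ t < 0 →
      0 ≤ ⟪v, fderiv ℝ (gradient w) (c t) v⟫ - η * ‖v‖ ^ 2 := by
    intro t ht hneg
    rcases halt (c t) with h | h
    · have := h v
      linarith
    · exfalso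
      have hsub : c t - θs = t • v := by simp [hc]
      rw [hsub] at h
      rw [real_inner_smul_left] at h
      have hnorm : ‖t • v‖ ^ 2 = t ^ 2 * ‖v‖ ^ 2 := by
        rw [norm_smul]
        rw [mul_pow]
        simp [sq_abs]
      rw [hnorm] at h
      -- h : t * ⟪v, gradient w (c t)⟫ ≥ η * (t^2 * ‖v‖^2)
      have hφ : ⟪v, gradient w (c t)⟫ ≥ t * (η * ‖v‖ ^ 2) := by
        have := (mul_le_mul_iff_right₀ ht).mp (by nlinarith [h] : t * (t * (η * ‖v‖ ^ 2)) ≤ t * ⟪v, gradient w (c t)⟫)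
        linarith
      have : 0 ≤ ψ t := by simp only [hψ]; linarith
      linarith
  by_contra hcon
  push_neg at hcon
  have hψ1 : ψ 1 < 0 := by
    simp only [hψ, hcθ, one_mul]
    linarith
  set S : Set ℝ := Icc (0:ℝ) 1 ∩ {t | 0 ≤ ψ t} with hS
  have hS0 : (0:ℝ) ∈ S := ⟨⟨le_rfl, zero_le_one⟩, by simp [hψ0]⟩
  have hSbdd : BddAbove S := ⟨1, fun t ht => ht.1.2⟩
  have hclosed : IsClosed S := isClosed_Icc.inter (isClosed_le continuous_const hψcont)
  set s := sSup S with hs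
  have hsS : s ∈ S := hclosed.csSup_mem ⟨0, hS0⟩ hSbdd
  have hs1 : s < 1 := lt_of_le_of_ne hsS.1.2 (fun h => by
    have := hsS.2
    rw [h] at this
    simp only [Set.mem_setOf_eq] at this
    linarith)
  have hmono : MonotoneOn ψ (Icc s 1) := by
    apply monotoneOn_of_deriv_nonneg (convex_Icc s 1) (hψcont.continuousOn)
    · intro t ht
      exact (hDψ t).differentiableAt.differentiableWithinAt
    · intro t ht
      rw [interior_Icc] at ht
      have htpos : 0 < t := lt_of_le_of_lt hsS.1.1 ht.1
      have htnotS : t ∉ S := fun hmem => absurd (le_csSup hSbdd hmem) (not_le.mpr ht.1)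
      have hψt : ψ t < 0 := by
        by_contra hge
        push_neg at hge
        exact htnotS ⟨⟨htpos.le, ht.2.le⟩, hge⟩
      rw [(hDψ t).deriv]
      exact key t htpos hψt
  have := hmono (left_mem_Icc.mpr hs1.le) (right_mem_Icc.mpr hs1.le) hs1.le
  have h2 := hsS.2
  simp only [Set.mem_setOf_eq] at h2
  linarith


end
end
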